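/- Let (s,t) be an edge with s<t. If an execution contains two transitions C_0 ↦ C_1 and D_0 ↦ D_1 with C_1 ↦* D_0, in each of which node s executes the rule Seduction(t), then both s and t execute the Reset rule in transitions occurring between C_1 and D_0. -/
import Mathlib


/-!
Formal model of the self-stabilizing maximal-matching algorithm in the
link-register model under read/write atomicity.

Nodes form a finite simple graph `G` on a vertex type `V` whose linear order
plays the role of the distinct identifiers.  A configuration records, for each
node `u`, its pointer `p u : Option V` (`none` = null), its lock variable
`m u : Fin 3`, and for each (directed) link a register `r u v : RegFlag × Fin 3`.
-/

inductive RegFlag where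
  | Idle | You | Other
deriving DecidableEq

abbrev RegVal : Type := RegFlag × Fin 3

inductive Rule (V : Type) where
  | write (a : V)
  | seduction (a : V)
  | marriage (a : V)
  | increase
  | reset
deriving DecidableEq

structure Config (V : Type) where
  p : V → Option V
  m : V → Fin 3
  r : V → V → RegVal

variable {V : Type}

def correctRegisterValue [DecidableEq V] (C : Config V) (u a : V) : RegVal :=
  match C.p u with
  | none => (RegFlag.Idle, 0)
  | some b => if b = a then (RegFlag.You, C.m u) else (RegFlag.Other, C.m u)

def PRabandonment [LinearOrder V] (C : Config V) (u : V) : Prop :=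
  ∃ v, C.p u = some v ∧
    (((C.r v u).1 ≠ RegFlag.You ∧ (v < u ∨ C.m u ≠ 0)) ∨
     (C.r v u = (RegFlag.Other, 2) ∧ u < v))

def PRreset [LinearOrder V] (C : Config V) (u : V) : Prop :=
  ∃ v, C.p u = some v ∧ (C.r v u).1 = RegFlag.You ∧
    ((C.m u = 0 ∧ (C.r v u).2 = 2) ∨
     (C.m u = 2 ∧ (C.r v u).2 = 0) ∨
     (C.m u = 0 ∧ (C.r v u).2 = 1 ∧ v < u) ∨
     (C.m u = 1 ∧ (C.r v u).2 = 0 ∧ u < v) ∨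
     (C.m u = 1 ∧ (C.r v u).2 = 2 ∧ u < v) ∨
     (C.m u = 2 ∧ (C.r v u).2 = 1 ∧ v < u))

/-- The guard of each rule of node `u` in configuration `C`. -/
def eligible [LinearOrder V] (G : SimpleGraph V) (C : Config V) (u : V) : Rule V → Prop
  | .write a => G.Adj u a ∧ C.r u a ≠ correctRegisterValue C u a
  | .seduction a => G.Adj u a ∧ C.p u = none ∧ C.r u a = correctRegisterValue C u a ∧
      C.r a u = (RegFlag.Idle, 0) ∧ u < a
  | .marriage a => G.Adj u a ∧ C.p u = none ∧ C.r u a = correctRegisterValue C u a ∧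
      C.r a u = (RegFlag.You, 0) ∧ a < u
  | .increase => ∃ v, C.p u = some v ∧ C.r u v = correctRegisterValue C u v ∧
      (C.r v u).1 = RegFlag.You ∧
      ((C.m u = 0 ∧ ((u < v ∧ (C.r v u).2 = 1) ∨ (v < u ∧ (C.r v u).2 = 0))) ∨
       (C.m u = 1 ∧ ((u < v ∧ (C.r v u).2 = 1) ∨ (v < u ∧ (C.r v u).2 = 2))))
  | .reset => ∃ v, C.p u = some v ∧ C.r u v = correctRegisterValue C u v ∧
      (PRabandonment C u ∨ PRreset C u)

/-- Simultaneous application of (at most) one rule per node.  `A u = some R`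
means node `u` executes rule `R`; each action only modifies the data owned by
the acting node. -/
def step [DecidableEq V] (C : Config V) (A : V → Option (Rule V)) : Config V where
  p u :=
    match A u with
    | some (Rule.seduction a) => some a
    | some (Rule.marriage a) => some a
    | some Rule.reset => none
    | _ => C.p u
  m u :=
    match A u with
    | some (Rule.seduction _) => 0
    | some (Rule.marriage _) => 0
    | some Rule.reset => 0
    | some Rule.increase => C.m u + 1
    | _ => C.m u
  r u a :=
    match A u with
    | some (Rule.write b) => if a = b then correctRegisterValue C u a else C.r u a
    | _ => C.r u a

/-- An execution `C_0, A_0, C_1, A_1, …, C_T`: at each transition `i < T`, a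
nonempty set of eligible rules (at most one per node) is executed
simultaneously. -/
structure Execution [LinearOrder V] (G : SimpleGraph V) where
  T : ℕ
  conf : ℕ → Config V
  act : ℕ → V → Option (Rule V)
  act_nonempty : ∀ i < T, ∃ u, (act i u).isSome
  act_eligible : ∀ i < T, ∀ u R, act i u = some R → eligible G (conf i) u R
  conf_succ : ∀ i < T, conf (i + 1) = step (conf i) (act i)

/-- A configuration is stable if no rule is eligible at any node. -/
def stableConfig [LinearOrder V] (G : SimpleGraph V) (C : Config V) : Prop :=
  ∀ u R, ¬ eligible G C u R

/-- The edge `(s,t)` (with `s < t` intended) is in state `(You, α, β)`. -/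
def edgeState (C : Config V) (s t : V) (α β : Fin 3) : Prop :=
  C.p s = some t ∧ C.p t = some s ∧ C.m s = α ∧ C.m t = β

def updatedCorrectState (C : Config V) (s t : V) (α β : Fin 3) : Prop :=
  edgeState C s t α β ∧ C.r s t = (RegFlag.You, α) ∧ C.r t s = (RegFlag.You, β) ∧
    ((α, β) = ((0 : Fin 3), (0 : Fin 3)) ∨ (α, β) = (0, 1) ∨ (α, β) = (1, 1) ∨
     (α, β) = (2, 1) ∨ (α, β) = (2, 2))

def toUpdateCorrectState (C : Config V) (s t : V) (α β : Fin 3) : Prop :=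
  edgeState C s t α β ∧
    ((((α, β) = ((0 : Fin 3), (1 : Fin 3)) ∨ (α, β) = (2, 2)) ∧
        C.r s t = (RegFlag.You, α) ∧ C.r t s = (RegFlag.You, β - 1)) ∨
     (((α, β) = ((1 : Fin 3), (1 : Fin 3)) ∨ (α, β) = (2, 1)) ∧
        C.r s t = (RegFlag.You, α - 1) ∧ C.r t s = (RegFlag.You, β)))

def correctState (C : Config V) (s t : V) (α β : Fin 3) : Prop :=
  updatedCorrectState C s t α β ∨ toUpdateCorrectState C s t α β

/-- Node `u` executes a `v`-rule in transition `k`: one of `Write(v)`,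
`Seduction(v)`, `Marriage(v)`, a `v`-`Increase` or a `v`-`Reset`. -/
def execVRule [LinearOrder V] {G : SimpleGraph V} (E : Execution G) (k : ℕ) (u v : V) : Prop :=
  k < E.T ∧
    (E.act k u = some (Rule.write v) ∨ E.act k u = some (Rule.seduction v) ∨
     E.act k u = some (Rule.marriage v) ∨
     ((E.act k u = some Rule.increase ∨ E.act k u = some Rule.reset) ∧
       (E.conf k).p u = some v))

section AuxLemmas

/-- Least change point of a predicate. -/
private lemma chgMin {P : ℕ → Prop} {a b : ℕ} (hab : a ≤ b) (ha : ¬ P a) (hb : P b) :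
    ∃ l, a ≤ l ∧ l < b ∧ (∀ m, a ≤ m → m ≤ l → ¬ P m) ∧ P (l + 1) := by
  classical
  have hne : a ≠ b := fun h => ha (h ▸ hb)
  have hex : ∃ l, a ≤ l ∧ P (l + 1) := ⟨b - 1, by omega, by
    have : b - 1 + 1 = b := by omega
    rw [this]; exact hb⟩
  have hspec := Nat.find_spec hex
  have hpre : ∀ m, a ≤ m → m ≤ Nat.find hex → ¬ P m := by
    intro m ham hml hPm
    rcases Nat.eq_or_lt_of_le ham with h | h
    · exact ha (h ▸ hPm)
    · have h1 : m - 1 < Nat.find hex := by omega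
      have h2 := Nat.find_min hex h1
      apply h2
      have : m - 1 + 1 = m := by omega
      exact ⟨by omega, by rw [this]; exact hPm⟩
  refine ⟨Nat.find hex, hspec.1, ?_, hpre, hspec.2⟩
  by_contra hcon
  exact hpre b hab (by omega) hb

variable {V : Type} [LinearOrder V] {G : SimpleGraph V}

private lemma reset_of_p_none (E : Execution G) {k : ℕ} {u : V}
    (hk : k < E.T) (h1 : (E.conf k).p u ≠ none) (h2 : (E.conf (k + 1)).p u = none) :
    E.act k u = some Rule.reset := by
  have hs := E.conf_succ k hk
  rw [hs] at h2
  rcases h : E.act k u with _ | R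
  · simp [step, h] at h2; exact absurd h2 h1
  · cases R with
    | write a => simp [step, h] at h2; exact absurd h2 h1
    | seduction a => simp [step, h] at h2
    | marriage a => simp [step, h] at h2
    | increase => simp [step, h] at h2; exact absurd h2 h1
    | reset => rfl

private lemma p_persist (E : Execution G) {k : ℕ} {u v : V}
    (hk : k < E.T) (h1 : (E.conf k).p u = some v) (h2 : (E.conf (k + 1)).p u ≠ none) :
    (E.conf (k + 1)).p u = some v := by
  have hs := E.conf_succ k hk
  rw [hs] at h2 ⊢
  rcases h : E.act k u with _ | R
  · simpa [step, h] using h1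
  · cases R with
    | write a => simpa [step, h] using h1
    | seduction a =>
      have helig := E.act_eligible k hk u _ h
      obtain ⟨-, hp, -⟩ := helig
      rw [hp] at h1; cases h1
    | marriage a =>
      have helig := E.act_eligible k hk u _ h
      obtain ⟨-, hp, -⟩ := helig
      rw [hp] at h1; cases h1
    | increase => simpa [step, h] using h1
    | reset => exact absurd (by simp [step, h]) h2

private lemma increase_of_m_change (E : Execution G) {k : ℕ} {u : V}
    (hk : k < E.T) (h1 : (E.conf k).m u = 0) (h2 : (E.conf (k + 1)).m u ≠ 0) :
    E.act k u = some Rule.increase := by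
  have hs := E.conf_succ k hk
  rw [hs] at h2
  rcases h : E.act k u with _ | R
  · simp [step, h, h1] at h2
  · cases R with
    | write a => simp [step, h, h1] at h2
    | seduction a => simp [step, h] at h2
    | marriage a => simp [step, h] at h2
    | increase => rfl
    | reset => simp [step, h] at h2

private lemma write_of_r_change (E : Execution G) {k : ℕ} {u a : V}
    (hk : k < E.T) (hne : (E.conf (k + 1)).r u a ≠ (E.conf k).r u a) :
    E.act k u = some (Rule.write a) ∧
      (E.conf (k + 1)).r u a = correctRegisterValue (E.conf k) u a := by
  have hs := E.conf_succ k hk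
  rw [hs] at hne ⊢
  rcases h : E.act k u with _ | R
  · simp [step, h] at hne
  · cases R with
    | write b =>
      by_cases hab : a = b
      · subst hab; exact ⟨rfl, by simp [step, h]⟩
      · simp [step, h, hab] at hne
    | seduction b => simp [step, h] at hne
    | marriage b => simp [step, h] at hne
    | increase => simp [step, h] at hne
    | reset => simp [step, h] at hne

private lemma p_none_of_correct_idle {C : Config V} {u a : V}
    (h : correctRegisterValue C u a = (RegFlag.Idle, 0)) : C.p u = none := by
  unfold correctRegisterValue at h
  rcases hp : C.p u with _ | b
  · rfl
  · rw [hp] at h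
    by_cases hb : b = a <;> simp [hb] at h

end AuxLemmas

/-- Between two `Seduction(t)` moves of `s` (an edge `(s,t)`
with `s < t`), both `s` and `t` execute a `Reset` move. -/
theorem stmt_12 {V : Type} [Fintype V] [LinearOrder V] (G : SimpleGraph V)
    (s t : V) (hadj : G.Adj s t) (hst : s < t) (E : Execution G)
    (i j : ℕ) (hij : i + 1 ≤ j) (hjT : j < E.T)
    (hi : E.act i s = some (Rule.seduction t))
    (hj : E.act j s = some (Rule.seduction t)) :
    (∃ k, i + 1 ≤ k ∧ k + 1 ≤ j ∧ E.act k s = some Rule.reset) ∧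
    (∃ k, i + 1 ≤ k ∧ k + 1 ≤ j ∧ E.act k t = some Rule.reset) := by
  have hiT : i < E.T := by omega
  obtain ⟨-, -, -, hrtsi, -⟩ := E.act_eligible i hiT s _ hi
  obtain ⟨-, hpj, -, hrtsj, -⟩ := E.act_eligible j hjT s _ hj
  have hconf1 := E.conf_succ i hiT
  have hp1 : (E.conf (i + 1)).p s = some t := by rw [hconf1]; simp [step, hi]
  have hm1 : (E.conf (i + 1)).m s = 0 := by rw [hconf1]; simp [step, hi]
  -- reset point of s
  obtain ⟨k, hk1, hk2, hkpre, hkP⟩ :=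
    chgMin (P := fun l => (E.conf l).p s = none) hij (by simp [hp1]) hpj
  have hkT : k < E.T := by omega
  have hks : E.act k s = some Rule.reset :=
    reset_of_p_none E hkT (hkpre k hk1 le_rfl) hkP
  refine ⟨⟨k, hk1, by omega, hks⟩, ?_⟩
  -- p s stays `some t` on [i+1, k]
  have persist : ∀ l, i + 1 ≤ l → l ≤ k → (E.conf l).p s = some t := by
    intro l hl1 hl2
    induction l with
    | zero => omega
    | succ n ih =>
      rcases Nat.lt_or_ge n (i + 1) with hn | hn
      · have hni : n = i := by omega
        subst hni; exact hp1
      · exact p_persist E (by omega) (ih hn (by omega)) (hkpre (n + 1) (by omega) hl2)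
  -- the reset guard at k forces r t s ≠ (Idle,0) at some b ∈ [i+1, k]
  obtain ⟨v, hpv, -, hcase⟩ := E.act_eligible k hkT s _ hks
  have hb : ∃ b, i + 1 ≤ b ∧ b ≤ k ∧ (E.conf b).r t s ≠ (RegFlag.Idle, 0) := by
    rcases hcase with hab | hres
    · obtain ⟨w, hw, hcase2⟩ := hab
      have hwt : w = t := Option.some_inj.mp (hw.symm.trans (persist k hk1 le_rfl))
      rcases hcase2 with ⟨hne, hsmall⟩ | ⟨heq, -⟩
      · rcases hsmall with hlt | hm
        · rw [hwt] at hlt; exact absurd hlt (not_lt.mpr hst.le)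
        · -- m s changed from 0, so an Increase happened, whose guard needs flag You
          obtain ⟨l, hl1, hl2, hlpre, hlP⟩ :=
            chgMin (P := fun l => (E.conf l).m s ≠ 0) hk1 (by simp [hm1]) hm
          have hlm0 : (E.conf l).m s = 0 := not_not.mp (hlpre l hl1 le_rfl)
          have hinc : E.act l s = some Rule.increase :=
            increase_of_m_change E (by omega) hlm0 hlP
          obtain ⟨w, hw, -, hflag, -⟩ := E.act_eligible l (by omega) s _ hinc
          have hwt : w = t :=
            Option.some_inj.mp (hw.symm.trans (persist l hl1 (by omega)))
          rw [hwt] at hflag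
          refine ⟨l, hl1, by omega, fun h => ?_⟩
          rw [h] at hflag; exact RegFlag.noConfusion hflag
      · rw [hwt] at heq
        exact ⟨k, hk1, le_rfl, by rw [heq]; simp⟩
    · obtain ⟨w, hw, hflag, -⟩ := hres
      have hwt : w = t := Option.some_inj.mp (hw.symm.trans (persist k hk1 le_rfl))
      rw [hwt] at hflag
      refine ⟨k, hk1, le_rfl, fun h => ?_⟩
      rw [h] at hflag; exact RegFlag.noConfusion hflag
  obtain ⟨b, hb1, hb2, hbne⟩ := hb
  -- write of t turning r t s away from (Idle,0), at a ∈ [i, b)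
  obtain ⟨a, ha1, ha2, hapre, haP⟩ :=
    chgMin (P := fun l => (E.conf l).r t s ≠ (RegFlag.Idle, 0)) (a := i) (b := b)
      (by omega) (by simp [hrtsi]) hbne
  have haT : a < E.T := by omega
  have hra : (E.conf a).r t s = (RegFlag.Idle, 0) := not_not.mp (hapre a ha1 le_rfl)
  have hwr := write_of_r_change E haT (by rw [hra]; exact haP)
  have hpta : (E.conf a).p t ≠ none := by
    intro h
    exact haP (by rw [hwr.2]; simp [correctRegisterValue, h])
  have hpt1 : (E.conf (a + 1)).p t ≠ none := by
    rw [E.conf_succ a haT]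
    simpa [step, hwr.1] using hpta
  -- write of t turning r t s back to (Idle,0), at k' ∈ [b, j)
  obtain ⟨k', hk'1, hk'2, hk'pre, hk'P⟩ :=
    chgMin (P := fun l => (E.conf l).r t s = (RegFlag.Idle, 0)) (a := b) (b := j) (by omega) hbne hrtsj
  have hk'T : k' < E.T := by omega
  have hwr' := write_of_r_change E hk'T
    (by rw [hk'P]; exact fun h => (hk'pre k' hk'1 le_rfl) h.symm)
  have hptk' : (E.conf k').p t = none :=
    p_none_of_correct_idle (by rw [← hwr'.2]; exact hk'P)
  -- t's pointer goes from non-null to null: a Reset of t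
  obtain ⟨l, hl1, hl2, hlpre, hlP⟩ :=
    chgMin (P := fun l => (E.conf l).p t = none) (a := a + 1) (b := k') (by omega) hpt1 hptk'
  exact ⟨l, by omega, by omega, reset_of_p_none E (by omega) (hlpre l hl1 le_rfl) hlP⟩
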